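/- arXiv:1008.2233 — 6 statements merged into one kernel-verified Lean document; each statement's English description precedes it below -/
import Mathlib

section
/- For every integer g ≥ 2, 4·arccosh(1/(2·sin(π(g+1)/(12g)))) < 2·log(3 + 2√3 + 2·√(5 + 3√3)). -/
open Real

noncomputable def arccosh (x : ℝ) : ℝ := Real.log (x + Real.sqrt (x ^ 2 - 1))
noncomputable def arctanh (x : ℝ) : ℝ := Real.log ((1 + x) / (1 - x)) / 2

/-!
Write `θ_g = π (g + 1) / (12 g)`. For `g ≥ 2` the angle lies in `(π/12, π/6]`, where
`θ ↦ arccosh (1 / (2 sin θ))` is strictly decreasing, so the left-hand side is strictly below its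
value at `θ = π/12`, the limit `g → ∞`. That value is exactly the right-hand side: with
`c = 1 / (2 sin (π/12))` one has `c² = 2 + √3`, and the doubling formula
`2 arccosh c = log (2c² - 1 + 2c √(c² - 1))` turns `4 arccosh c` into `2 log (3 + 2√3 + 2√(5 + 3√3))`.
-/

theorem arccosh_strictMonoOn : StrictMonoOn arccosh (Set.Ici 1) := by
  intro x (hx : 1 ≤ x) y (hy : 1 ≤ y) hxy
  have hsqrt : √(x ^ 2 - 1) ≤ √(y ^ 2 - 1) := Real.sqrt_le_sqrt (by nlinarith)
  exact Real.log_lt_log (by positivity) (by linarith)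

theorem two_mul_arccosh {x : ℝ} (hx : 1 ≤ x ^ 2) :
    2 * arccosh x = log (2 * x ^ 2 - 1 + 2 * x * √(x ^ 2 - 1)) := by
  have hsq : √(x ^ 2 - 1) ^ 2 = x ^ 2 - 1 := Real.sq_sqrt (by linarith)
  rw [arccosh, ← Nat.cast_ofNat, ← Real.log_pow]
  congr 1
  linear_combination hsq

theorem strictAntiOn_arccosh_one_div_two_mul_sin :
    StrictAntiOn (fun θ => arccosh (1 / (2 * sin θ))) (Set.Ioc 0 (π / 6)) := by
  have hsin_le {θ : ℝ} (hθ : θ ∈ Set.Ioc 0 (π / 6)) : 0 < sin θ ∧ sin θ ≤ 1 / 2 := by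
    refine ⟨sin_pos_of_pos_of_lt_pi hθ.1 (by linarith [hθ.2, pi_pos]), ?_⟩
    rw [← sin_pi_div_six]
    exact sin_le_sin_of_le_of_le_pi_div_two (by linarith [hθ.1, pi_pos]) (by linarith [pi_pos])
      hθ.2
  intro α hα θ hθ hαθ
  obtain ⟨hα_pos, hα_le⟩ := hsin_le hα
  obtain ⟨hθ_pos, hθ_le⟩ := hsin_le hθ
  have hsin_lt : sin α < sin θ :=
    sin_lt_sin_of_lt_of_le_pi_div_two (by linarith [hα.1, pi_pos])
      (by linarith [hθ.2, pi_pos]) hαθ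
  refine arccosh_strictMonoOn ?_ ?_ ?_
  · simp only [Set.mem_Ici]; rw [le_div_iff₀ (by positivity)]; linarith
  · simp only [Set.mem_Ici]; rw [le_div_iff₀ (by positivity)]; linarith
  · gcongr

theorem one_div_two_mul_sin_pi_div_twelve_sq : (1 / (2 * sin (π / 12))) ^ 2 = 2 + √3 := by
  have h3 : √3 ^ 2 = 3 := Real.sq_sqrt (by norm_num)
  have hsin_sq : sin (π / 12) ^ 2 = (2 - √3) / 4 := by
    rw [sin_sq_eq_half_sub, show 2 * (π / 12) = π / 6 by ring, cos_pi_div_six]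
    ring
  rw [div_pow, mul_pow, hsin_sq]
  have : 2 - √3 ≠ 0 := by nlinarith [Real.sqrt_nonneg 3]
  field_simp
  linear_combination 4 * h3

theorem four_mul_arccosh_one_div_two_mul_sin_pi_div_twelve :
    4 * arccosh (1 / (2 * sin (π / 12))) =
      2 * log (3 + 2 * √3 + 2 * √(5 + 3 * √3)) := by
  set c := 1 / (2 * sin (π / 12))
  have hc_sq : c ^ 2 = 2 + √3 := one_div_two_mul_sin_pi_div_twelve_sq
  have hc_pos : 0 < c := by
    have : 0 < sin (π / 12) := sin_pos_of_pos_of_lt_pi (by positivity) (by linarith [pi_pos])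
    positivity
  have hc_sqrt : c * √(c ^ 2 - 1) = √(5 + 3 * √3) := by
    rw [← Real.sqrt_sq hc_pos.le, ← Real.sqrt_mul (sq_nonneg c), Real.sqrt_sq hc_pos.le, hc_sq]
    congr 1
    linear_combination Real.sq_sqrt (show (0 : ℝ) ≤ 3 by norm_num)
  rw [show (4 : ℝ) = 2 * 2 by norm_num, mul_assoc,
    two_mul_arccosh (by rw [hc_sq]; linarith [Real.sqrt_nonneg 3]), mul_assoc, hc_sqrt, hc_sq]
  ring_nf

theorem bavard_bound (g : ℤ) (hg : 2 ≤ g) :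
    4 * arccosh (1 / (2 * Real.sin (Real.pi * ((g : ℝ) + 1) / (12 * (g : ℝ))))) <
      2 * Real.log (3 + 2 * Real.sqrt 3 + 2 * Real.sqrt (5 + 3 * Real.sqrt 3)) := by
  have hg' : (2 : ℝ) ≤ g := by exact_mod_cast hg
  have hπ := pi_pos
  have hlower : π / 12 < π * ((g : ℝ) + 1) / (12 * g) := by
    rw [div_lt_div_iff₀ (by norm_num) (by positivity)]; nlinarith
  have hupper : π * ((g : ℝ) + 1) / (12 * g) ≤ π / 6 := by
    rw [div_le_div_iff₀ (by positivity) (by norm_num)]; nlinarith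
  rw [← four_mul_arccosh_one_div_two_mul_sin_pi_div_twelve]
  gcongr 4 * ?_
  exact strictAntiOn_arccosh_one_div_two_mul_sin ⟨by positivity, by linarith⟩
    ⟨hlower.trans_le' (by positivity), hupper⟩ hlower
end

section
/- For all real γ > 0 and w > 0, 2·arccosh(sinh(γ/2)^2·(cosh(2w) − 1) − 1) < 2γ + 4w, provided sinh(γ/2)^2·(cosh(2w) − 1) − 1 ≥ 1. -/
/-!
Write `x = sinh(γ/2)² (cosh 2w - 1) - 1`. By the half-angle formula this is
`(cosh γ - 1)(cosh 2w - 1)/2 - 1`, which is smaller than `cosh γ · cosh 2w`, and the addition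
formula gives `cosh γ · cosh 2w ≤ cosh (γ + 2w)` since both hyperbolic sines are nonnegative.
As `arccosh` is increasing and inverts `cosh` on `[0, ∞)`, `arccosh x < γ + 2w`.
-/

open Real

theorem arccosh_eq_arcosh : arccosh = Real.arcosh := rfl

namespace Real

theorem arcosh_lt_iff_lt_cosh {x y : ℝ} (hx : 0 < x) (hy : 0 ≤ y) :
    arcosh x < y ↔ x < cosh y := by
  rw [← arcosh_lt_arcosh hx (cosh_pos y), arcosh_cosh hy]

theorem sinh_half_sq (x : ℝ) : sinh (x / 2) ^ 2 = (cosh x - 1) / 2 := by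
  have h := cosh_two_mul (x / 2)
  rw [mul_div_cancel₀ x two_ne_zero, cosh_sq] at h
  linarith

theorem cosh_mul_cosh_le_cosh_add {a b : ℝ} (ha : 0 ≤ a) (hb : 0 ≤ b) :
    cosh a * cosh b ≤ cosh (a + b) := by
  rw [cosh_add]
  have := mul_nonneg (sinh_nonneg_iff.2 ha) (sinh_nonneg_iff.2 hb)
  linarith

theorem sinh_half_sq_mul_cosh_sub_one_sub_one_lt_cosh_add {a b : ℝ} (ha : 0 ≤ a) (hb : 0 ≤ b) :
    sinh (a / 2) ^ 2 * (cosh b - 1) - 1 < cosh (a + b) := by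
  have hca := one_le_cosh a
  have hcb := one_le_cosh b
  calc sinh (a / 2) ^ 2 * (cosh b - 1) - 1 = (cosh a - 1) * (cosh b - 1) / 2 - 1 := by
        rw [sinh_half_sq]; ring
    _ < cosh a * cosh b := by nlinarith
    _ ≤ cosh (a + b) := cosh_mul_cosh_le_cosh_add ha hb

end Real

theorem nu_exact_lt_homotopy_bound (γ w : ℝ) (hγ : 0 < γ) (hw : 0 < w)
    (h : Real.sinh (γ / 2) ^ 2 * (Real.cosh (2 * w) - 1) - 1 ≥ 1) :
    2 * arccosh (Real.sinh (γ / 2) ^ 2 * (Real.cosh (2 * w) - 1) - 1) < 2 * γ + 4 * w := by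
  have hlt : arccosh (sinh (γ / 2) ^ 2 * (cosh (2 * w) - 1) - 1) < γ + 2 * w := by
    rw [arccosh_eq_arcosh, arcosh_lt_iff_lt_cosh (by linarith) (by positivity)]
    exact sinh_half_sq_mul_cosh_sub_one_sub_one_lt_cosh_add hγ.le (by positivity)
  linarith
end

section
/- For every integer g ≥ 2 and every real γ with π/2 ≤ γ ≤ 2·log(4g−2), γ/2 + 2·arcsinh(2π(g−1)/γ) < 3·log(8g−7). -/
open Real

theorem Real.arsinh_le_log_two_mul_add_one {x : ℝ} (hx : 0 ≤ x) :
    arsinh x ≤ log (2 * x + 1) := by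
  have hsqrt : √(1 + x ^ 2) ≤ x + 1 :=
    Real.sqrt_le_iff.2 ⟨by linarith, by nlinarith⟩
  rw [arsinh]
  exact log_le_log (by positivity) (by linarith)

lemma two_pi_mul_div_le_four_mul {a γ : ℝ} (ha : 0 ≤ a) (hγ : π / 2 ≤ γ) :
    2 * π * a / γ ≤ 4 * a := by
  have hγ_pos : 0 < γ := lt_of_lt_of_le (by positivity) hγ
  rw [div_le_iff₀ hγ_pos]
  nlinarith

theorem gamma2_moderate_bound (g : ℤ) (hg : 2 ≤ g) (γ : ℝ)
    (h1 : Real.pi / 2 ≤ γ) (h2 : γ ≤ 2 * Real.log (4 * (g : ℝ) - 2)) :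
    γ / 2 + 2 * Real.arsinh (2 * Real.pi * ((g : ℝ) - 1) / γ) <
      3 * Real.log (8 * (g : ℝ) - 7) := by
  have hg' : (2 : ℝ) ≤ g := by exact_mod_cast hg
  have harsinh : arsinh (2 * π * ((g : ℝ) - 1) / γ) ≤ log (8 * (g : ℝ) - 7) :=
    calc arsinh (2 * π * ((g : ℝ) - 1) / γ)
        ≤ arsinh (4 * ((g : ℝ) - 1)) :=
          arsinh_le_arsinh.2 (two_pi_mul_div_le_four_mul (by linarith) h1)
      _ ≤ log (2 * (4 * ((g : ℝ) - 1)) + 1) :=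
          arsinh_le_log_two_mul_add_one (by linarith)
      _ = log (8 * (g : ℝ) - 7) := by ring_nf
  have hlog : log (4 * (g : ℝ) - 2) < log (8 * (g : ℝ) - 7) :=
    log_lt_log (by linarith) (by linarith)
  linarith
end

section
/- For every integer g ≥ 2 and every real γ with 0 < γ < π/2, 2·arccosh(sinh(γ/2)^2·(cosh(2·arcsinh(2π(g−1)/γ)) − 1) − 1) ≤ 4·log(8g−7), provided the argument of arccosh is at least 1. -/
open Real

/-!
Since `cosh (2 arsinh t) - 1 = 2 t²`, the argument of `arccosh` is `X = 2 (sinh (γ/2) · t)² - 1`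
with `t = 2π(g-1)/γ`, and `arccosh X ≤ log (2X)`. Convexity of `sinh` on `[0, ∞)` makes
`sinh x / x` increasing, so for `γ/2 ≤ 1` we get `sinh (γ/2) · t ≤ π sinh 1 · (g-1) ≤ 4 (g-1)`,
whence `2X ≤ 64 (g-1)² ≤ (8g-7)²`.
-/

lemma cosh_two_mul_arsinh_sub_one (t : ℝ) : cosh (2 * arsinh t) - 1 = 2 * t ^ 2 := by
  rw [cosh_two_mul, cosh_sq, sinh_arsinh]
  ring

lemma arccosh_le_log_two_mul {x : ℝ} (hx : 0 < x) : arccosh x ≤ log (2 * x) := by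
  have hsqrt : √(x ^ 2 - 1) ≤ x := by
    calc √(x ^ 2 - 1) ≤ √(x ^ 2) := sqrt_le_sqrt (by linarith)
      _ = x := sqrt_sq hx.le
  exact log_le_log (by positivity) (by linarith)

lemma convexOn_sinh : ConvexOn ℝ (Set.Ici 0) sinh := by
  refine MonotoneOn.convexOn_of_deriv (convex_Ici 0) continuous_sinh.continuousOn
    differentiable_sinh.differentiableOn ?_
  rw [interior_Ici, Real.deriv_sinh]
  intro x hx y hy hxy
  rw [cosh_le_cosh, abs_of_pos hx, abs_of_pos hy]
  exact hxy

lemma sinh_div_self_le_sinh_div_self {x y : ℝ} (hx : 0 < x) (hxy : x ≤ y) :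
    sinh x / x ≤ sinh y / y := by
  simpa using convexOn_sinh.secant_mono (a := 0) Set.self_mem_Ici hx.le (hx.trans_le hxy).le
    hx.ne' (hx.trans_le hxy).ne' hxy

lemma pi_mul_sinh_one_le_four : π * sinh 1 ≤ 4 := by
  have he : exp 1 * exp (-1) = 1 := by rw [← exp_add]; norm_num
  have hinv : 0.36 < exp (-1) := by nlinarith [exp_pos (-1), exp_one_lt_d9]
  have hsinh : sinh 1 < 1.18 := by rw [sinh_eq]; linarith [exp_one_lt_d9]
  nlinarith [pi_pos, pi_lt_d2, sinh_pos_iff.2 one_pos]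

theorem nu_config1_small_systole (g : ℤ) (hg : 2 ≤ g) (γ : ℝ)
    (h1 : 0 < γ) (h2 : γ < Real.pi / 2)
    (h3 : Real.sinh (γ / 2) ^ 2 *
        (Real.cosh (2 * Real.arsinh (2 * Real.pi * ((g : ℝ) - 1) / γ)) - 1) - 1 ≥ 1) :
    2 * arccosh (Real.sinh (γ / 2) ^ 2 *
        (Real.cosh (2 * Real.arsinh (2 * Real.pi * ((g : ℝ) - 1) / γ)) - 1) - 1) ≤
      4 * Real.log (8 * (g : ℝ) - 7) := by
  set t := 2 * π * ((g : ℝ) - 1) / γ with ht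
  have hg' : (2 : ℝ) ≤ g := by exact_mod_cast hg
  have hX : sinh (γ / 2) ^ 2 * (cosh (2 * arsinh t) - 1) - 1 =
      2 * (sinh (γ / 2) * t) ^ 2 - 1 := by
    rw [cosh_two_mul_arsinh_sub_one]; ring
  have hst_nonneg : 0 ≤ sinh (γ / 2) * t :=
    mul_nonneg (sinh_nonneg_iff.2 (by positivity))
      (div_nonneg (mul_nonneg (by positivity) (by linarith)) h1.le)
  have hst : sinh (γ / 2) * t ≤ 4 * ((g : ℝ) - 1) := by
    calc sinh (γ / 2) * t = π * ((g : ℝ) - 1) * (sinh (γ / 2) / (γ / 2)) := by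
          rw [ht]; field_simp
      _ ≤ π * ((g : ℝ) - 1) * sinh 1 := by
          gcongr
          · exact mul_nonneg pi_pos.le (by linarith)
          · simpa using
              sinh_div_self_le_sinh_div_self (y := 1) (half_pos h1) (by linarith [pi_lt_d2])
      _ ≤ 4 * ((g : ℝ) - 1) := by nlinarith [pi_mul_sinh_one_le_four]
  rw [hX] at h3 ⊢
  calc 2 * arccosh (2 * (sinh (γ / 2) * t) ^ 2 - 1)
      ≤ 2 * log (2 * (2 * (sinh (γ / 2) * t) ^ 2 - 1)) := by
        gcongr; exact arccosh_le_log_two_mul (by linarith)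
    _ ≤ 2 * log ((8 * (g : ℝ) - 7) ^ 2) := by
        gcongr
        nlinarith [pow_le_pow_left₀ hst_nonneg hst 2]
    _ = 4 * log (8 * (g : ℝ) - 7) := by rw [log_pow]; ring
end

section
/- For every integer g ≥ 2 and every real γ with 0 < γ < π/2, 2·arccosh(sinh(γ/4)·(2π(g−1)/γ)) ≤ 3·log(8g−7), provided sinh(γ/4)·(2π(g−1)/γ) ≥ 1. -/
open Real

/-! Since `sinh t ≤ t eᵗ`, the quantity `x = sinh(γ/4) · 2π(g-1)/γ` is at most `(π e / 2)(g-1)`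
once `γ ≤ 4`; with `arccosh x ≤ log (2x)` this gives `2 arccosh x ≤ 2 log (π e (g-1))`, and
`(π e n)² ≤ 81 n² ≤ (8n+1)³` finishes the estimate. -/

lemma Real.sinh_le_mul_exp (t : ℝ) : sinh t ≤ t * exp t := by
  have hsplit : sinh t = exp t * (1 - exp (-(2 * t))) / 2 := by
    rw [sinh_eq, mul_sub, ← exp_add]
    ring_nf
  have htail : 1 - exp (-(2 * t)) ≤ 2 * t := by linarith [add_one_le_exp (-(2 * t))]
  rw [hsplit]
  nlinarith [exp_pos t]

lemma sinh_quarter_mul_le {γ n : ℝ} (hγ : 0 < γ) (hγ4 : γ ≤ 4) (hn : 0 ≤ n) :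
    sinh (γ / 4) * (2 * π * n / γ) ≤ π * exp 1 * n / 2 := by
  have hfac : 0 ≤ 2 * π * n / γ := by positivity
  calc sinh (γ / 4) * (2 * π * n / γ)
      ≤ γ / 4 * exp (γ / 4) * (2 * π * n / γ) :=
        mul_le_mul_of_nonneg_right (sinh_le_mul_exp _) hfac
    _ = π * exp (γ / 4) * n / 2 := by field_simp; ring
    _ ≤ π * exp 1 * n / 2 := by
        gcongr
        linarith

lemma two_mul_log_pi_mul_exp_one_mul_le {n : ℝ} (hn : 1 ≤ n) :
    2 * log (π * exp 1 * n) ≤ 3 * log (8 * n + 1) := by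
  have hπe : π * exp 1 < 9 := by
    nlinarith [pi_lt_d2, exp_one_lt_d9, pi_pos, exp_pos 1]
  have hpoly : (π * exp 1 * n) ^ 2 ≤ (8 * n + 1) ^ 3 :=
    calc (π * exp 1 * n) ^ 2 ≤ (9 * n) ^ 2 := by gcongr
      _ ≤ (8 * n + 1) ^ 3 := by nlinarith
  have hlog := log_le_log (by positivity) hpoly
  rw [log_pow, log_pow] at hlog
  push_cast at hlog
  exact hlog

theorem nu1_config2_small_systole_general (g : ℤ) (hg : 2 ≤ g) (γ : ℝ)
    (h1 : 0 < γ) (h2 : γ < Real.pi / 2) :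
    2 * arccosh (Real.sinh (γ / 4) * (2 * Real.pi * ((g : ℝ) - 1) / γ)) ≤
      3 * Real.log (8 * (g : ℝ) - 7) := by
  have hn : (1 : ℝ) ≤ (g : ℝ) - 1 := by
    have : (2 : ℝ) ≤ g := by exact_mod_cast hg
    linarith
  have hγ4 : γ ≤ 4 := by linarith [pi_lt_four]
  have hx : 0 < sinh (γ / 4) * (2 * π * ((g : ℝ) - 1) / γ) :=
    mul_pos (sinh_pos_iff.2 (by positivity)) (by positivity)
  calc 2 * arccosh (sinh (γ / 4) * (2 * π * ((g : ℝ) - 1) / γ))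
      ≤ 2 * log (2 * (sinh (γ / 4) * (2 * π * ((g : ℝ) - 1) / γ))) := by
        gcongr
        exact arccosh_le_log_two_mul hx
    _ ≤ 2 * log (π * exp 1 * ((g : ℝ) - 1)) := by
        gcongr 2 * log ?_
        linarith [sinh_quarter_mul_le h1 hγ4 (by linarith : (0 : ℝ) ≤ (g : ℝ) - 1)]
    _ ≤ 3 * log (8 * ((g : ℝ) - 1) + 1) := two_mul_log_pi_mul_exp_one_mul_le hn
    _ = 3 * log (8 * (g : ℝ) - 7) := by ring_nf

theorem nu1_config2_small_systole (g : ℤ) (hg : 2 ≤ g) (γ : ℝ)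
    (h1 : 0 < γ) (h2 : γ < Real.pi / 2)
    (h3 : Real.sinh (γ / 4) * (2 * Real.pi * ((g : ℝ) - 1) / γ) ≥ 1) :
    2 * arccosh (Real.sinh (γ / 4) * (2 * Real.pi * ((g : ℝ) - 1) / γ)) ≤
      3 * Real.log (8 * (g : ℝ) - 7) :=
  nu1_config2_small_systole_general g hg γ h1 h2
end

section
/- Let W' = arctanh(2/3). For every real a > 1.1, arcsinh((2√5/5)·sinh(a/2)/sqrt((9/5)·cosh(a/4)^2 − 1)) is such that 1/(π − 2·arcsin(1/cosh(of this quantity))) ≤ 3.1/3, i.e. 3/(π − 2·arcsin(1/cosh(w₂^Q))) ≤ 3.1 where sinh(w₂^Q) = (2√5/5)·sinh(a/2)/sqrt((9/5)·cosh(a/4)^2 − 1). -/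
/-!
Since `arccos (cosh w)⁻¹ = arctan (sinh w)` for `w ≥ 0` (the Gudermannian), the denominator is
`2 * arctan (sinh w₂)`, so it suffices that `sinh w₂ ≥ tan (15 / 31) ≈ 0.526`. Writing
`c = cosh (a / 4)`, one has `sinh w₂ ^ 2 = 16 (c² - 1) c² / (9 c² - 5)`, which is increasing in `c`,
and `c ≥ 1 + a² / 32 > 1.0378` already forces `sinh w₂ ≥ 0.53`.
-/

open Real

namespace Real

lemma sq_le_sinh_sq (x : ℝ) : x ^ 2 ≤ sinh x ^ 2 := by
  rcases le_total 0 x with hx | hx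
  · exact pow_le_pow_left₀ hx (self_le_sinh_iff.2 hx) 2
  · nlinarith [sinh_le_self_iff.2 hx, sinh_nonpos_iff.2 hx]

lemma one_add_sq_div_two_le_cosh (x : ℝ) : 1 + x ^ 2 / 2 ≤ cosh x := by
  have h : cosh x = 1 + 2 * sinh (x / 2) ^ 2 := by
    have h2 := cosh_two_mul (x / 2)
    rw [mul_div_cancel₀ x two_ne_zero, cosh_sq] at h2
    linarith
  nlinarith [sq_le_sinh_sq (x / 2)]

lemma sinh_two_mul_sq (x : ℝ) : sinh (2 * x) ^ 2 = 4 * (cosh x ^ 2 - 1) * cosh x ^ 2 := by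
  rw [sinh_two_mul, ← sinh_sq]; ring

lemma arctan_sinh {x : ℝ} (hx : 0 ≤ x) : arctan (sinh x) = arccos (cosh x)⁻¹ := by
  rw [arctan_eq_arccos (sinh_nonneg_iff.2 hx), ← cosh_sq', sqrt_sq (cosh_pos x).le]

lemma pi_sub_two_mul_arcsin_inv_cosh {x : ℝ} (hx : 0 ≤ x) :
    π - 2 * arcsin (cosh x)⁻¹ = 2 * arctan (sinh x) := by
  rw [arctan_sinh hx, arccos_eq_pi_div_two_sub_arcsin]; ring

end Real

lemma tan_fifteen_div_thirtyOne_le : tan (15 / 31) ≤ 0.53 := by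
  have hx : |(15 / 31 : ℝ)| ≤ 1 := by rw [abs_of_pos] <;> norm_num
  have hsin := (abs_le.1 (sin_bound hx)).2
  have hcos := (abs_le.1 (cos_bound hx)).1
  rw [abs_of_pos (by norm_num : (0 : ℝ) < 15 / 31)] at hsin hcos
  have hcos_pos : 0 < cos (15 / 31) := by linarith
  rw [tan_eq_sin_div_cos, div_le_iff₀ hcos_pos]
  linarith

lemma le_sinh_half_div_sqrt {a : ℝ} (ha : 1.1 < a) :
    (0.53 : ℝ) ≤ (2 * sqrt 5 / 5) * sinh (a / 2) / sqrt ((9 / 5) * cosh (a / 4) ^ 2 - 1) := by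
  set c := cosh (a / 4)
  have hc : 1.0378125 ≤ c := by nlinarith [one_add_sq_div_two_le_cosh (a / 4)]
  have hD : 0 < (9 / 5) * c ^ 2 - 1 := by nlinarith
  have hN : 0 ≤ (2 * sqrt 5 / 5) * sinh (a / 2) :=
    mul_nonneg (by positivity) (sinh_nonneg_iff.2 (by linarith))
  have hN_sq : ((2 * sqrt 5 / 5) * sinh (a / 2)) ^ 2 = 16 / 5 * (c ^ 2 - 1) * c ^ 2 := by
    rw [mul_pow, show a / 2 = 2 * (a / 4) by ring, sinh_two_mul_sq, div_pow, mul_pow,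
      sq_sqrt (by norm_num : (0 : ℝ) ≤ 5)]
    ring
  rw [le_div_iff₀ (sqrt_pos.2 hD), ← pow_le_pow_iff_left₀ (by positivity) hN two_ne_zero,
    hN_sq, mul_pow, sq_sqrt hD.le]
  have hc_sq : 1.0378125 ^ 2 ≤ c ^ 2 := pow_le_pow_left₀ (by norm_num) hc 2
  nlinarith [sq_nonneg (c ^ 2 - 1.0378125 ^ 2)]

theorem capacity_bound_case2b1 (a w₂ : ℝ) (ha : a > 1.1) (hw₂ : 0 ≤ w₂)
    (h : Real.sinh w₂ = (2 * Real.sqrt 5 / 5) * Real.sinh (a / 2) /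
        Real.sqrt ((9 / 5) * Real.cosh (a / 4) ^ 2 - 1)) :
    3 / (Real.pi - 2 * Real.arcsin (1 / Real.cosh w₂)) ≤ 3.1 := by
  have hsinh : tan (15 / 31) ≤ sinh w₂ :=
    h ▸ tan_fifteen_div_thirtyOne_le.trans (le_sinh_half_div_sqrt ha)
  have harctan : 15 / 31 ≤ arctan (sinh w₂) := by
    rw [← arctan_tan (x := 15 / 31) (by linarith [pi_pos]) (by linarith [pi_gt_three])]
    exact arctan_mono hsinh
  rw [one_div, pi_sub_two_mul_arcsin_inv_cosh hw₂, div_le_iff₀ (by linarith)]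
  linarith
end
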